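/- arXiv:math/0609495 — 4 statements merged into one kernel-verified Lean document; each statement's English description precedes it below -/
import Mathlib

section
/- Let n ≥ 2 be an integer, r > 0, and f : [0,r] → ℝ a C² function with f(0) = 0, f'(0) = 1, and f(t) > 0 for all t ∈ (0,r]. Let λ ∈ ℝ and let φ : [0,r] → ℝ be a radial first eigenfunction with eigenvalue λ, i.e. φ is C² on [0,r], φ(t) > 0 for t ∈ [0,r), φ(r) = 0, φ'(0) = 0, and φ''(t) + (n−1)(f'(t)/f(t))φ'(t) + λφ(t) = 0 on (0,r). Let u : [0,r] → ℝ be continuous with u ≥ 0 and not identically zero, and suppose c ∈ ℝ satisfies u(t) ≥ c·T(u)(t) for all t ∈ [0,r]. Then λ ≥ c. (Equivalently, λ ≥ inf over t ∈ [0,r) of the quotient h(t,u) = u(t)/T(u)(t).) -/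
/-!
Write `v = T(u)` and `A(t) = ∫₀ᵗ f^{n-1} u`, so that `v' = -A / f^{n-1}`, and put the radial
equation in divergence form `(f^{n-1} φ')' = -λ f^{n-1} φ`. The Wronskian-type function
`W = f^{n-1} φ' v + φ A` then satisfies `W' = f^{n-1} φ (u - λ v)`.

If `λ < c`, then `u - λ v ≥ (c - λ) v ≥ 0`, so `W` is nondecreasing on `(0, r)`. It tends to `0`
at both ends: at the centre because `φ'(0) = 0`, `A(0) = 0` and `v` stays bounded (`f'(0) = 1`
makes `f` increasing near `0`, whence `A / f^{n-1} = O(t)`); at the boundary because `φ(r) = 0`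
and `v(r) = 0`. Hence `W' ≡ 0`, i.e. `u = λ v`; together with `u ≥ c v` this forces `v = 0` and
then `u ≡ 0`.
-/

open Set intervalIntegral

/-- The operator `T` from Barroso–Bessa: `T u t = ∫_t^r f(σ)^{-(n-1)} ∫_0^σ f(s)^{n-1} u(s) ds dσ`. -/
noncomputable def BBop (n : ℕ) (r : ℝ) (f u : ℝ → ℝ) (t : ℝ) : ℝ :=
  ∫ σ in t..r, (1 / f σ ^ (n - 1)) * ∫ s in (0:ℝ)..σ, f s ^ (n - 1) * u s

open Filter Topology

theorem hasDerivAt_integral_of_continuousOn {g : ℝ → ℝ} {s : Set ℝ} {a t : ℝ}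
    (hg : ContinuousOn g s) (hs : s.OrdConnected) (ha : a ∈ s) (ht : s ∈ 𝓝 t) :
    HasDerivAt (fun x => ∫ y in a..x, g y) (g t) t :=
  integral_hasDerivAt_right (hg.mono (hs.uIcc_subset ha (mem_of_mem_nhds ht))).intervalIntegrable
    ((hg.mono interior_subset).stronglyMeasurableAtFilter isOpen_interior t
      (mem_interior_iff_mem_nhds.2 ht))
    (hg.continuousAt ht)

theorem exists_monotoneOn_Icc_of_derivWithin_pos {f : ℝ → ℝ} {a b : ℝ} (hab : a < b)
    (hf : ContDiffOn ℝ 1 f (Icc a b)) (ha : 0 < derivWithin f (Icc a b) a) :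
    ∃ c ∈ Ioc a b, MonotoneOn f (Icc a c) := by
  have hpos : ∀ᶠ x in 𝓝[≥] a, 0 < derivWithin f (Icc a b) x := by
    rw [← nhdsWithin_Icc_eq_nhdsGE hab]
    exact hf.continuousOn_derivWithin (uniqueDiffOn_Icc hab) le_rfl a (left_mem_Icc.2 hab.le)
      (Ioi_mem_nhds ha)
  obtain ⟨c, hac, hc⟩ := mem_nhdsGE_iff_exists_Icc_subset.1 hpos
  refine ⟨min c b, ⟨lt_min hac hab, min_le_right _ _⟩,
    monotoneOn_of_hasDerivWithinAt_nonneg (f' := derivWithin f (Icc a b)) (convex_Icc _ _)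
      (hf.continuousOn.mono (Icc_subset_Icc_right (min_le_right _ _))) (fun x hx => ?_)
      (fun x hx => ?_)⟩
  · rw [interior_Icc] at hx
    have hx' : Icc a b ∈ 𝓝 x := Icc_mem_nhds hx.1 (hx.2.trans_le (min_le_right _ _))
    rw [derivWithin_of_mem_nhds hx']
    exact ((hf.differentiableOn one_ne_zero x (mem_of_mem_nhds hx')).differentiableAt
      hx').hasDerivAt.hasDerivWithinAt
  · rw [interior_Icc] at hx
    exact (hc ⟨hx.1.le, hx.2.le.trans (min_le_left _ _)⟩).le

theorem eqOn_zero_of_hasDerivAt_nonneg_of_tendsto {W W' : ℝ → ℝ} {a b l : ℝ}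
    (hW : ∀ t ∈ Ioo a b, HasDerivAt W (W' t) t) (hW' : ∀ t ∈ Ioo a b, 0 ≤ W' t)
    (ha : Tendsto W (𝓝[>] a) (𝓝 l)) (hb : Tendsto W (𝓝[<] b) (𝓝 l)) :
    EqOn W' 0 (Ioo a b) := by
  have hmono : MonotoneOn W (Ioo a b) :=
    monotoneOn_of_hasDerivWithinAt_nonneg (convex_Ioo a b)
      (fun t ht => (hW t ht).continuousAt.continuousWithinAt)
      (fun t ht => (hW t (interior_subset ht)).hasDerivWithinAt)
      (fun t ht => hW' t (interior_subset ht))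
  have hconst : EqOn W (fun _ => l) (Ioo a b) := fun t ht => le_antisymm
    (ge_of_tendsto hb (by
      filter_upwards [Ioo_mem_nhdsLT ht.2] with s hs
      exact hmono ht ⟨ht.1.trans hs.1, hs.2⟩ hs.1.le))
    (le_of_tendsto ha (by
      filter_upwards [Ioo_mem_nhdsGT ht.1] with s hs
      exact hmono ⟨hs.1, hs.2.trans ht.2⟩ ht hs.2.le))
  intro t ht
  exact (hW t ht).unique <| (hasDerivAt_const t l).congr_of_eventuallyEq <|
    eventually_of_mem (Ioo_mem_nhds ht.1 ht.2) hconst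

theorem hasDerivAt_wronskian {w φ P v A u : ℝ → ℝ} {lam t : ℝ} (hw : w t ≠ 0)
    (hP : HasDerivAt P (-(lam * (w t * φ t))) t) (hφ : HasDerivAt φ (P t / w t) t)
    (hv : HasDerivAt v (-(1 / w t * A t)) t) (hA : HasDerivAt A (w t * u t) t) :
    HasDerivAt (fun x => P x * v x + φ x * A x) (w t * φ t * (u t - lam * v t)) t := by
  refine ((hP.fun_mul hv).fun_add (hφ.fun_mul hA)).congr_deriv ?_
  field_simp
  ring

theorem hasDerivAt_pow_mul_deriv {n : ℕ} (hn : 1 ≤ n) {f φ : ℝ → ℝ} {lam t : ℝ} (hft : f t ≠ 0)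
    (hf : DifferentiableAt ℝ f t) (hφ : DifferentiableAt ℝ (deriv φ) t)
    (hode : deriv (deriv φ) t + ((n : ℝ) - 1) * (deriv f t / f t) * deriv φ t + lam * φ t = 0) :
    HasDerivAt (fun x => f x ^ (n - 1) * deriv φ x) (-(lam * (f t ^ (n - 1) * φ t))) t := by
  refine ((hf.hasDerivAt.fun_pow (n - 1)).fun_mul hφ.hasDerivAt).congr_deriv ?_
  obtain ⟨k, rfl⟩ : ∃ k, n = k + 1 := ⟨n - 1, by omega⟩
  have hφ'' : deriv (deriv φ) t = -(k * (deriv f t / f t) * deriv φ t + lam * φ t) := by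
    push_cast at hode
    linarith
  rw [Nat.add_sub_cancel, hφ'']
  rcases k with _ | k
  · simp
  · rw [Nat.add_sub_cancel, pow_succ]
    field_simp
    ring

noncomputable def radialMass (k : ℕ) (f u : ℝ → ℝ) (t : ℝ) : ℝ :=
  ∫ s in (0 : ℝ)..t, f s ^ k * u s

-- `derivWithin` keeps the first term continuous up to both endpoints of `[0, r]`.
noncomputable def radialWronskian (n : ℕ) (r : ℝ) (f φ u : ℝ → ℝ) (t : ℝ) : ℝ :=
  f t ^ (n - 1) * derivWithin φ (Icc 0 r) t * BBop n r f u t + φ t * radialMass (n - 1) f u t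

section Radial

variable {k n : ℕ} {r : ℝ} {f u : ℝ → ℝ}

theorem radialMass_zero : radialMass k f u 0 = 0 :=
  integral_same

theorem radialMass_nonneg (hf : ∀ t ∈ Ioc 0 r, 0 ≤ f t) (hu : ∀ t ∈ Icc 0 r, 0 ≤ u t) {σ : ℝ}
    (hσ : σ ∈ Icc 0 r) : 0 ≤ radialMass k f u σ := by
  rw [radialMass, integral_of_le hσ.1]
  exact MeasureTheory.setIntegral_nonneg measurableSet_Ioc fun s hs =>
    mul_nonneg (pow_nonneg (hf s ⟨hs.1, hs.2.trans hσ.2⟩) k) (hu s ⟨hs.1.le, hs.2.trans hσ.2⟩)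

theorem abs_radialMass_le {σ U : ℝ} (hσ : 0 ≤ σ) (hmono : MonotoneOn f (Icc 0 σ))
    (hf : ∀ t ∈ Ioc 0 σ, 0 ≤ f t) (hu : ∀ t ∈ Ioc 0 σ, |u t| ≤ U) :
    |radialMass k f u σ| ≤ σ * (f σ ^ k * U) := by
  have hbound : ∀ s ∈ uIoc 0 σ, ‖f s ^ k * u s‖ ≤ f σ ^ k * U := by
    intro s hs
    rw [uIoc_of_le hσ] at hs
    rw [Real.norm_eq_abs, abs_mul, abs_pow, abs_of_nonneg (hf s hs)]
    exact mul_le_mul (pow_le_pow_left₀ (hf s hs) (hmono ⟨hs.1.le, hs.2⟩ ⟨hσ, le_rfl⟩ hs.2) k)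
      (hu s hs) (abs_nonneg _) (pow_nonneg (hf σ ⟨hs.1.trans_le hs.2, le_rfl⟩) k)
  simpa [radialMass, mul_comm σ, abs_of_nonneg hσ] using norm_integral_le_of_norm_le_const hbound

theorem continuousOn_radialMass (hf : ContinuousOn f (Icc 0 r)) (hu : ContinuousOn u (Icc 0 r)) :
    ContinuousOn (radialMass k f u) (Icc 0 r) := by
  rcases lt_or_ge r 0 with hr | hr
  · simp [Icc_eq_empty_of_lt hr]
  · rw [← uIcc_of_le hr]
    exact continuousOn_primitive_interval
      (((hf.pow k).mul hu).integrableOn_Icc.mono_set (uIcc_of_le hr).subset)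

theorem hasDerivAt_radialMass (hf : ContinuousOn f (Icc 0 r)) (hu : ContinuousOn u (Icc 0 r))
    {t : ℝ} (ht : t ∈ Ioo 0 r) : HasDerivAt (radialMass k f u) (f t ^ k * u t) t :=
  hasDerivAt_integral_of_continuousOn ((hf.pow k).mul hu) ordConnected_Icc
    (left_mem_Icc.2 (ht.1.trans ht.2).le) (Icc_mem_nhds ht.1 ht.2)

theorem continuousOn_radialMass_div (hf : ContinuousOn f (Icc 0 r))
    (hfpos : ∀ t ∈ Ioc 0 r, 0 < f t) (hu : ContinuousOn u (Icc 0 r)) :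
    ContinuousOn (fun σ => 1 / f σ ^ k * radialMass k f u σ) (Ioc 0 r) :=
  (continuousOn_const.div ((hf.mono Ioc_subset_Icc_self).pow k)
      fun σ hσ => pow_ne_zero k (hfpos σ hσ).ne').mul
    ((continuousOn_radialMass hf hu).mono Ioc_subset_Icc_self)

theorem exists_abs_radialMass_div_le (hr : 0 < r) (hf : ContDiffOn ℝ 1 f (Icc 0 r))
    (hf'0 : 0 < derivWithin f (Icc 0 r) 0) (hfpos : ∀ t ∈ Ioc 0 r, 0 < f t)
    (hu : ContinuousOn u (Icc 0 r)) :
    ∃ G, ∀ σ ∈ Ioc 0 r, |1 / f σ ^ k * radialMass k f u σ| ≤ G := by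
  obtain ⟨c, hc, hmono⟩ := exists_monotoneOn_Icc_of_derivWithin_pos hr hf hf'0
  obtain ⟨U, hU⟩ := isCompact_Icc.exists_bound_of_continuousOn hu
  obtain ⟨G, hG⟩ := isCompact_Icc.exists_bound_of_continuousOn
    ((continuousOn_radialMass_div (k := k) hf.continuousOn hfpos hu).mono
      fun x (hx : x ∈ Icc c r) => ⟨hc.1.trans_le hx.1, hx.2⟩)
  refine ⟨max (c * U) G, fun σ hσ => ?_⟩
  rcases le_total σ c with hσc | hσc
  · have hfσ : 0 < f σ ^ k := pow_pos (hfpos σ hσ) k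
    have hA := abs_radialMass_le (k := k) hσ.1.le (hmono.mono (Icc_subset_Icc_right hσc))
      (fun t ht => (hfpos t ⟨ht.1, ht.2.trans hσ.2⟩).le)
      (fun t ht => hU t ⟨ht.1.le, ht.2.trans hσ.2⟩)
    have hU0 : 0 ≤ U := (norm_nonneg _).trans (hU σ (Ioc_subset_Icc_self hσ))
    rw [abs_mul, abs_of_pos (one_div_pos.2 hfσ)]
    calc 1 / f σ ^ k * |radialMass k f u σ| ≤ 1 / f σ ^ k * (σ * (f σ ^ k * U)) := by gcongr
      _ = σ * U := by field_simp
      _ ≤ max (c * U) G := le_max_of_le_left (by gcongr)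
  · exact (hG σ ⟨hσc, hσ.2⟩).trans (le_max_right _ _)

theorem BBop_nonneg (hfpos : ∀ t ∈ Ioc 0 r, 0 < f t) (hu : ∀ t ∈ Icc 0 r, 0 ≤ u t) {t : ℝ}
    (ht : t ∈ Ioc 0 r) : 0 ≤ BBop n r f u t :=
  integral_nonneg ht.2 fun σ hσ =>
    mul_nonneg (one_div_nonneg.2 (pow_nonneg (hfpos σ ⟨ht.1.trans_le hσ.1, hσ.2⟩).le _))
      (radialMass_nonneg (fun s hs => (hfpos s hs).le) hu ⟨(ht.1.trans_le hσ.1).le, hσ.2⟩)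

theorem exists_abs_BBop_le (hr : 0 < r) (hf : ContDiffOn ℝ 1 f (Icc 0 r))
    (hf'0 : 0 < derivWithin f (Icc 0 r) 0) (hfpos : ∀ t ∈ Ioc 0 r, 0 < f t)
    (hu : ContinuousOn u (Icc 0 r)) :
    ∃ G, 0 ≤ G ∧ ∀ t ∈ Ioc 0 r, |BBop n r f u t| ≤ G * (r - t) := by
  obtain ⟨G, hG⟩ := exists_abs_radialMass_div_le (k := n - 1) hr hf hf'0 hfpos hu
  refine ⟨G, (abs_nonneg _).trans (hG r ⟨hr, le_rfl⟩), fun t ht => ?_⟩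
  have h := norm_integral_le_of_norm_le_const (a := t) (b := r)
    (f := fun σ => 1 / f σ ^ (n - 1) * radialMass (n - 1) f u σ) fun σ hσ => by
      rw [uIoc_of_le ht.2] at hσ
      exact hG σ ⟨ht.1.trans hσ.1, hσ.2⟩
  simpa [BBop, radialMass, abs_of_nonneg (sub_nonneg.2 ht.2)] using h

theorem hasDerivAt_BBop (hf : ContinuousOn f (Icc 0 r)) (hfpos : ∀ t ∈ Ioc 0 r, 0 < f t)
    (hu : ContinuousOn u (Icc 0 r)) {t : ℝ} (ht : t ∈ Ioo 0 r) :
    HasDerivAt (BBop n r f u) (-(1 / f t ^ (n - 1) * radialMass (n - 1) f u t)) t := by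
  have hsymm : BBop n r f u =
      fun x => -∫ σ in r..x, 1 / f σ ^ (n - 1) * radialMass (n - 1) f u σ :=
    funext fun x => integral_symm r x
  rw [hsymm]
  exact (hasDerivAt_integral_of_continuousOn (continuousOn_radialMass_div hf hfpos hu)
    ordConnected_Ioc (right_mem_Ioc.2 (ht.1.trans ht.2)) (Ioc_mem_nhds ht.1 ht.2)).neg

theorem hasDerivAt_radialWronskian {φ : ℝ → ℝ} {lam t : ℝ} (hn : 1 ≤ n)
    (hf : ContDiffOn ℝ 1 f (Icc 0 r)) (hfpos : ∀ t ∈ Ioc 0 r, 0 < f t)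
    (hφ : ContDiffOn ℝ 2 φ (Icc 0 r)) (hu : ContinuousOn u (Icc 0 r)) (ht : t ∈ Ioo 0 r)
    (hode : deriv (deriv φ) t + ((n : ℝ) - 1) * (deriv f t / f t) * deriv φ t + lam * φ t = 0) :
    HasDerivAt (radialWronskian n r f φ u)
      (f t ^ (n - 1) * φ t * (u t - lam * BBop n r f u t)) t := by
  have hIcc : Icc 0 r ∈ 𝓝 t := Icc_mem_nhds ht.1 ht.2
  have hft : f t ≠ 0 := (hfpos t (Ioo_subset_Ioc_self ht)).ne'
  have hderiv : derivWithin φ (Icc 0 r) =ᶠ[𝓝 t] deriv φ := by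
    filter_upwards [Ioo_mem_nhds ht.1 ht.2] with x hx
    exact derivWithin_of_mem_nhds (Icc_mem_nhds hx.1 hx.2)
  have hφ'' : DifferentiableAt ℝ (deriv φ) t :=
    (((hφ.mono Ioo_subset_Icc_self).deriv_of_isOpen isOpen_Ioo (m := 1) le_rfl).differentiableOn
      one_ne_zero t ht).differentiableAt (Ioo_mem_nhds ht.1 ht.2)
  have hP : HasDerivAt (fun x => f x ^ (n - 1) * derivWithin φ (Icc 0 r) x)
      (-(lam * (f t ^ (n - 1) * φ t))) t := (hasDerivAt_pow_mul_deriv hn hft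
    ((hf.differentiableOn one_ne_zero t (mem_of_mem_nhds hIcc)).differentiableAt hIcc) hφ''
    hode).congr_of_eventuallyEq (hderiv.mono fun x hx => by simp only [hx])
  have hφ' : HasDerivAt φ (f t ^ (n - 1) * derivWithin φ (Icc 0 r) t / f t ^ (n - 1)) t := by
    rw [mul_div_cancel_left₀ _ (pow_ne_zero _ hft), hderiv.eq_of_nhds]
    exact ((hφ.differentiableOn two_ne_zero t (mem_of_mem_nhds hIcc)).differentiableAt
      hIcc).hasDerivAt
  exact hasDerivAt_wronskian (w := fun x => f x ^ (n - 1)) (pow_ne_zero _ hft) hP hφ'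
    (hasDerivAt_BBop hf.continuousOn hfpos hu ht) (hasDerivAt_radialMass hf.continuousOn hu ht)

theorem tendsto_radialWronskian_nhdsGT_zero {φ : ℝ → ℝ} (hr : 0 < r)
    (hf : ContDiffOn ℝ 1 f (Icc 0 r)) (hf'0 : 0 < derivWithin f (Icc 0 r) 0)
    (hfpos : ∀ t ∈ Ioc 0 r, 0 < f t) (hφ : ContDiffOn ℝ 1 φ (Icc 0 r))
    (hφ'0 : derivWithin φ (Icc 0 r) 0 = 0) (hu : ContinuousOn u (Icc 0 r)) :
    Tendsto (radialWronskian n r f φ u) (𝓝[>] 0) (𝓝 0) := by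
  have h0 : (0 : ℝ) ∈ Icc 0 r := left_mem_Icc.2 hr.le
  have hP : Tendsto (fun t => f t ^ (n - 1) * derivWithin φ (Icc 0 r) t) (𝓝[>] 0) (𝓝 0) := by
    have := (((hf.continuousOn.fun_pow (n - 1)).fun_mul (hφ.continuousOn_derivWithin
      (uniqueDiffOn_Icc hr) le_rfl)) 0 h0).mono_of_mem_nhdsWithin (Icc_mem_nhdsGT hr)
    simpa [hφ'0] using this.tendsto
  obtain ⟨G, hG0, hG⟩ := exists_abs_BBop_le (n := n) hr hf hf'0 hfpos hu
  have hv : IsBoundedUnder (· ≤ ·) (𝓝[>] 0) (norm ∘ BBop n r f u) := by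
    refine isBoundedUnder_of_eventually_le (a := G * r) ?_
    filter_upwards [Ioo_mem_nhdsGT hr] with t ht
    exact (hG t (Ioo_subset_Ioc_self ht)).trans (by nlinarith [ht.1])
  have hA : Tendsto (fun t => φ t * radialMass (n - 1) f u t) (𝓝[>] 0) (𝓝 0) := by
    have := ((hφ.continuousOn.fun_mul (continuousOn_radialMass (k := n - 1) hf.continuousOn hu)) 0
      h0).mono_of_mem_nhdsWithin (Icc_mem_nhdsGT hr)
    simpa [radialMass_zero] using this.tendsto
  have hW := (hP.zero_mul_isBoundedUnder_le hv).add hA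
  rw [add_zero] at hW
  exact hW

theorem tendsto_radialWronskian_nhdsLT {φ : ℝ → ℝ} (hr : 0 < r)
    (hf : ContDiffOn ℝ 1 f (Icc 0 r)) (hf'0 : 0 < derivWithin f (Icc 0 r) 0)
    (hfpos : ∀ t ∈ Ioc 0 r, 0 < f t) (hφ : ContDiffOn ℝ 1 φ (Icc 0 r)) (hφr : φ r = 0)
    (hu : ContinuousOn u (Icc 0 r)) :
    Tendsto (radialWronskian n r f φ u) (𝓝[<] r) (𝓝 0) := by
  have hr' : r ∈ Icc 0 r := right_mem_Icc.2 hr.le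
  have hP := ((((hf.continuousOn.fun_pow (n - 1)).fun_mul (hφ.continuousOn_derivWithin
    (uniqueDiffOn_Icc hr) le_rfl)) r hr').mono_of_mem_nhdsWithin (Icc_mem_nhdsLT hr)).tendsto
  obtain ⟨G, -, hG⟩ := exists_abs_BBop_le (n := n) hr hf hf'0 hfpos hu
  have hv : Tendsto (BBop n r f u) (𝓝[<] r) (𝓝 0) := by
    refine squeeze_zero_norm' (a := fun t => G * (r - t)) ?_ ?_
    · filter_upwards [Ioo_mem_nhdsLT hr] with t ht using hG t (Ioo_subset_Ioc_self ht)
    · have : Tendsto (fun t => G * (r - t)) (𝓝 r) (𝓝 (G * (r - r))) :=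
        (continuous_const.mul (continuous_const.sub continuous_id)).tendsto r
      simpa using this.mono_left nhdsWithin_le_nhds
  have hA : Tendsto (fun t => φ t * radialMass (n - 1) f u t) (𝓝[<] r) (𝓝 0) := by
    have := ((hφ.continuousOn.fun_mul (continuousOn_radialMass (k := n - 1) hf.continuousOn hu)) r
      hr').mono_of_mem_nhdsWithin (Icc_mem_nhdsLT hr)
    simpa [hφr] using this.tendsto
  have hW := (hP.mul hv).add hA
  rw [mul_zero, add_zero] at hW
  exact hW

end Radial

theorem stmt4_general (n : ℕ) (hn : 2 ≤ n) (r : ℝ) (hr : 0 < r)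
    (f : ℝ → ℝ) (hf : ContDiffOn ℝ 2 f (Set.Icc 0 r))
    (hf'0 : derivWithin f (Set.Icc 0 r) 0 = 1)
    (hfpos : ∀ t ∈ Set.Ioc (0:ℝ) r, 0 < f t)
    (lam : ℝ) (φ : ℝ → ℝ) (hφ : ContDiffOn ℝ 2 φ (Set.Icc 0 r))
    (hφpos : ∀ t ∈ Set.Ico (0:ℝ) r, 0 < φ t) (hφr : φ r = 0)
    (hφ'0 : derivWithin φ (Set.Icc 0 r) 0 = 0)
    (hφode : ∀ t ∈ Set.Ioo (0:ℝ) r,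
      deriv (deriv φ) t + ((n : ℝ) - 1) * (deriv f t / f t) * deriv φ t + lam * φ t = 0)
    (u : ℝ → ℝ) (hu : ContinuousOn u (Set.Icc 0 r))
    (hunonneg : ∀ t ∈ Set.Icc (0:ℝ) r, 0 ≤ u t)
    (hune : ∃ t ∈ Set.Icc (0:ℝ) r, u t ≠ 0)
    (c : ℝ) (hc : ∀ t ∈ Set.Icc (0:ℝ) r, c * BBop n r f u t ≤ u t) :
    c ≤ lam := by
  by_contra! hlam
  have hf1 : ContDiffOn ℝ 1 f (Icc 0 r) := hf.of_le one_le_two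
  have hf'pos : 0 < derivWithin f (Icc 0 r) 0 := hf'0 ▸ one_pos
  have hv : ∀ t ∈ Ioo 0 r, 0 ≤ BBop n r f u t := fun t ht =>
    BBop_nonneg hfpos hunonneg (Ioo_subset_Ioc_self ht)
  have hweight : ∀ t ∈ Ioo 0 r, 0 < f t ^ (n - 1) * φ t := fun t ht =>
    mul_pos (pow_pos (hfpos t (Ioo_subset_Ioc_self ht)) _) (hφpos t (Ioo_subset_Ico_self ht))
  have hW' := eqOn_zero_of_hasDerivAt_nonneg_of_tendsto
    (fun t ht => hasDerivAt_radialWronskian (lam := lam) (by omega) hf1 hfpos hφ hu ht (hφode t ht))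
    (fun t ht => mul_nonneg (hweight t ht).le <| by
      nlinarith [hc t (Ioo_subset_Icc_self ht), hv t ht])
    (tendsto_radialWronskian_nhdsGT_zero hr hf1 hf'pos hfpos (hφ.of_le one_le_two) hφ'0 hu)
    (tendsto_radialWronskian_nhdsLT hr hf1 hf'pos hfpos (hφ.of_le one_le_two) hφr hu)
  have hu0 : EqOn u 0 (Ioo 0 r) := by
    intro t ht
    have hut : u t = lam * BBop n r f u t := by
      have := hW' ht
      simp only [Pi.zero_apply, mul_eq_zero, (hweight t ht).ne', false_or] at this
      linarith
    have hvt : BBop n r f u t = 0 := by nlinarith [hc t (Ioo_subset_Icc_self ht), hv t ht]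
    simp [hut, hvt]
  obtain ⟨t, ht, hut⟩ := hune
  exact hut (hu0.of_subset_closure hu continuousOn_const Ioo_subset_Icc_self
    (closure_Ioo hr.ne).symm.subset ht)

/-- Lower-bound half of Theorem 1: if `φ` is a positive radial first eigenfunction with
eigenvalue `λ`, and `u ≥ 0` not identically zero satisfies `u ≥ c · T(u)` on `[0,r]`,
then `λ ≥ c`. -/
theorem stmt4 (n : ℕ) (hn : 2 ≤ n) (r : ℝ) (hr : 0 < r)
    (f : ℝ → ℝ) (hf : ContDiffOn ℝ 2 f (Set.Icc 0 r))
    (hf0 : f 0 = 0) (hf'0 : derivWithin f (Set.Icc 0 r) 0 = 1)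
    (hfpos : ∀ t ∈ Set.Ioc (0:ℝ) r, 0 < f t)
    (lam : ℝ) (φ : ℝ → ℝ) (hφ : ContDiffOn ℝ 2 φ (Set.Icc 0 r))
    (hφpos : ∀ t ∈ Set.Ico (0:ℝ) r, 0 < φ t) (hφr : φ r = 0)
    (hφ'0 : derivWithin φ (Set.Icc 0 r) 0 = 0)
    (hφode : ∀ t ∈ Set.Ioo (0:ℝ) r,
      deriv (deriv φ) t + ((n : ℝ) - 1) * (deriv f t / f t) * deriv φ t + lam * φ t = 0)
    (u : ℝ → ℝ) (hu : ContinuousOn u (Set.Icc 0 r))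
    (hunonneg : ∀ t ∈ Set.Icc (0:ℝ) r, 0 ≤ u t)
    (hune : ∃ t ∈ Set.Icc (0:ℝ) r, u t ≠ 0)
    (c : ℝ) (hc : ∀ t ∈ Set.Icc (0:ℝ) r, c * BBop n r f u t ≤ u t) :
    c ≤ lam :=
  stmt4_general n hn r hr f hf hf'0 hfpos lam φ hφ hφpos hφr hφ'0 hφode u hu hunonneg hune c hc
end

section
/- Let n ≥ 2 be an integer, r > 0, and f : [0,r] → ℝ a C² function with f(0) = 0, f'(0) = 1, and f(t) > 0 for all t ∈ (0,r]. Let λ > 0 and let u : [0,r] → ℝ be continuous, nonnegative, not identically zero, and suppose u(t) = λ·T(u)(t) for all t ∈ [0,r] (i.e. the quotient h(t,u) = u(t)/T(u)(t) is identically equal to λ on [0,r)). Then u is C² on (0,r), u(t) > 0 for t ∈ [0,r), u(r) = 0, and u satisfies the eigenvalue equation u''(t) + (n−1)(f'(t)/f(t))u'(t) + λ·u(t) = 0 on (0,r); that is, u is a positive radial eigenfunction with eigenvalue λ. -/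
open Set intervalIntegral

/-- Equality case of Theorem 1 (one direction): if `u = λ · T(u)` on `[0,r]` with `λ > 0`
and `u ≥ 0` continuous not identically zero, then `u` is a positive radial eigenfunction
with eigenvalue `λ`. -/
theorem stmt6 (n : ℕ) (hn : 2 ≤ n) (r : ℝ) (hr : 0 < r)
    (f : ℝ → ℝ) (hf : ContDiffOn ℝ 2 f (Set.Icc 0 r))
    (hf0 : f 0 = 0) (hf'0 : derivWithin f (Set.Icc 0 r) 0 = 1)
    (hfpos : ∀ t ∈ Set.Ioc (0:ℝ) r, 0 < f t)
    (lam : ℝ) (hlam : 0 < lam)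
    (u : ℝ → ℝ) (hu : ContinuousOn u (Set.Icc 0 r))
    (hunonneg : ∀ t ∈ Set.Icc (0:ℝ) r, 0 ≤ u t)
    (hune : ∃ t ∈ Set.Icc (0:ℝ) r, u t ≠ 0)
    (heq : ∀ t ∈ Set.Icc (0:ℝ) r, u t = lam * BBop n r f u t) :
    ContDiffOn ℝ 2 u (Set.Ioo 0 r) ∧
    (∀ t ∈ Set.Ico (0:ℝ) r, 0 < u t) ∧ u r = 0 ∧
    (∀ t ∈ Set.Ioo (0:ℝ) r,
      deriv (deriv u) t + ((n : ℝ) - 1) * (deriv f t / f t) * deriv u t + lam * u t = 0) := by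
  set F : ℝ → ℝ := fun s => f s ^ (n - 1) with hF
  set g : ℝ → ℝ := fun σ => ∫ s in (0:ℝ)..σ, F s * u s with hg
  set φ : ℝ → ℝ := fun σ => g σ / F σ with hφ
  -- basic continuity facts
  have hfc : ContinuousOn f (Icc 0 r) := hf.continuousOn
  have hFc : ContinuousOn F (Icc 0 r) := hfc.pow _
  have hFuc : ContinuousOn (fun s => F s * u s) (Icc 0 r) := hFc.mul hu
  have hgc : ContinuousOn g (Icc 0 r) := by
    have h := intervalIntegral.continuousOn_primitive_interval
      (a := 0) (b := r) (μ := MeasureTheory.volume) (f := fun s => F s * u s)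
      (by rw [uIcc_of_le hr.le]; exact hFuc.integrableOn_Icc)
    rwa [uIcc_of_le hr.le] at h
  have hFpos : ∀ s ∈ Ioc (0:ℝ) r, 0 < F s := fun s hs => pow_pos (hfpos s hs) _
  have hfnonneg : ∀ s ∈ Icc (0:ℝ) r, 0 ≤ f s := by
    intro s hs
    rcases eq_or_lt_of_le hs.1 with h | h
    · rw [← h, hf0]
    · exact (hfpos s ⟨h, hs.2⟩).le
  have hFunn : ∀ s ∈ Icc (0:ℝ) r, 0 ≤ F s * u s := fun s hs =>
    mul_nonneg (pow_nonneg (hfnonneg s hs) _) (hunonneg s hs)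
  have hgnonneg : ∀ σ ∈ Icc (0:ℝ) r, 0 ≤ g σ := fun σ hσ =>
    intervalIntegral.integral_nonneg hσ.1 fun x hx =>
      hFunn x ⟨hx.1, hx.2.trans hσ.2⟩
  -- continuity of φ away from 0
  have hφcont : ContinuousOn φ (Ioc 0 r) := by
    exact ContinuousOn.div (hgc.mono Ioc_subset_Icc_self) (hFc.mono Ioc_subset_Icc_self)
      (fun s hs => (hFpos s hs).ne')
  have hsubIoc : ∀ a b : ℝ, 0 < a → b ≤ r → Set.uIcc a b ⊆ Ioc 0 r → True := fun _ _ _ _ _ => trivial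
  have hint : ∀ a b : ℝ, 0 < a → a ≤ b → b ≤ r →
      IntervalIntegrable φ MeasureTheory.volume a b := by
    intro a b ha hab hbr
    refine (hφcont.mono ?_).intervalIntegrable
    rw [uIcc_of_le hab]
    exact fun x hx => ⟨lt_of_lt_of_le ha hx.1, hx.2.trans hbr⟩
  -- rewrite the hypothesis in terms of φ
  have heq' : ∀ t ∈ Icc (0:ℝ) r, u t = lam * ∫ σ in t..r, φ σ := by
    intro t ht
    have := heq t ht
    rw [this]
    congr 1
    unfold BBop
    refine intervalIntegral.integral_congr fun σ hσ => ?_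
    simp [hφ, hg, hF, one_div, div_eq_inv_mul]
  -- u r = 0
  have hur : u r = 0 := by
    have := heq' r ⟨hr.le, le_refl r⟩
    rwa [intervalIntegral.integral_same, mul_zero] at this
  -- subtraction formula
  have hsub : ∀ a b : ℝ, 0 < a → a ≤ b → b ≤ r →
      u a - u b = lam * ∫ σ in a..b, φ σ := by
    intro a b ha hab hbr
    have h1 := heq' a ⟨ha.le, hab.trans hbr⟩
    have h2 := heq' b ⟨(ha.trans_le hab).le, hbr⟩
    have hadd := intervalIntegral.integral_add_adjacent_intervals
      (hint a b ha hab hbr) (hint b r (ha.trans_le hab) hbr le_rfl)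
    rw [h1, h2, ← hadd]
    ring
  have hφnonneg : ∀ σ ∈ Ioc (0:ℝ) r, 0 ≤ φ σ := fun σ hσ =>
    div_nonneg (hgnonneg σ (Ioc_subset_Icc_self hσ)) (hFpos σ hσ).le
  have hmono : ∀ a b : ℝ, 0 < a → a ≤ b → b ≤ r → u b ≤ u a := by
    intro a b ha hab hbr
    have h := hsub a b ha hab hbr
    have hpos : 0 ≤ ∫ σ in a..b, φ σ :=
      intervalIntegral.integral_nonneg hab fun x hx =>
        hφnonneg x ⟨lt_of_lt_of_le ha hx.1, hx.2.trans hbr⟩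
    nlinarith
  -- find a point in (0,r) where u is positive
  obtain ⟨s₁, hs₁mem, hs₁pos⟩ : ∃ s₁ ∈ Ioo (0:ℝ) r, 0 < u s₁ := by
    obtain ⟨t₀, ht₀, ht₀ne⟩ := hune
    have ht₀pos : 0 < u t₀ := lt_of_le_of_ne (hunonneg t₀ ht₀) (Ne.symm ht₀ne)
    have ht₀r : t₀ ≠ r := fun h => by rw [h, hur] at ht₀ne; exact ht₀ne rfl
    rcases eq_or_lt_of_le ht₀.1 with h0 | h0
    · -- t₀ = 0, use continuity
      have hcw : ContinuousWithinAt u (Icc 0 r) t₀ := hu.continuousWithinAt ht₀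
      have hev : ∀ᶠ x in nhdsWithin t₀ (Icc 0 r), 0 < u x := hcw.eventually (lt_mem_nhds ht₀pos)
      have hle : nhdsWithin t₀ (Ioo 0 r) ≤ nhdsWithin t₀ (Icc 0 r) :=
        nhdsWithin_mono _ Ioo_subset_Icc_self
      have hev2 : ∀ᶠ x in nhdsWithin t₀ (Ioo 0 r), 0 < u x := hle hev
      have hmemev : ∀ᶠ x in nhdsWithin t₀ (Ioo 0 r), x ∈ Ioo 0 r := eventually_mem_nhdsWithin
      have hne : (nhdsWithin t₀ (Ioo 0 r)).NeBot := by
        rw [← h0]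
        exact left_nhdsWithin_Ioo_neBot hr
      obtain ⟨x, hx1, hx2⟩ := (hev2.and hmemev).exists
      exact ⟨x, hx2, hx1⟩
    · exact ⟨t₀, ⟨h0, lt_of_le_of_ne ht₀.2 ht₀r⟩, ht₀pos⟩
  -- find s₂ ∈ (0, r) with g s₂ > 0
  obtain ⟨s₂, hs₂mem, hgs₂⟩ : ∃ s₂ ∈ Ioo (0:ℝ) r, 0 < g s₂ := by
    have hcF : ContinuousAt (fun s => F s * u s) s₁ :=
      hFuc.continuousAt (Icc_mem_nhds hs₁mem.1 hs₁mem.2)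
    have hFus₁ : 0 < F s₁ * u s₁ :=
      mul_pos (hFpos s₁ ⟨hs₁mem.1, hs₁mem.2.le⟩) hs₁pos
    have hev : ∀ᶠ x in nhds s₁, 0 < F x * u x := hcF.eventually (lt_mem_nhds hFus₁)
    rw [Metric.eventually_nhds_iff_ball] at hev
    obtain ⟨ε, hε, hball⟩ := hev
    set δ := min (ε / 2) (min (s₁ / 2) ((r - s₁) / 2)) with hδ
    have hδpos : 0 < δ := by
      apply lt_min (by linarith) (lt_min (by linarith [hs₁mem.1]) (by linarith [hs₁mem.2]))
    have hδε : δ < ε := lt_of_le_of_lt (min_le_left _ _) (by linarith)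
    have hδs₁ : δ < s₁ := lt_of_le_of_lt ((min_le_right _ _).trans (min_le_left _ _))
      (by linarith [hs₁mem.1])
    have hδr : s₁ + δ < r := by
      have : δ ≤ (r - s₁) / 2 := (min_le_right _ _).trans (min_le_right _ _)
      linarith [hs₁mem.2]
    refine ⟨s₁ + δ, ⟨by linarith [hs₁mem.1], hδr⟩, ?_⟩
    have hIa : (0:ℝ) ≤ s₁ - δ := by linarith
    have hIb : s₁ - δ ≤ s₁ + δ := by linarith
    have hsubset : Icc (s₁ - δ) (s₁ + δ) ⊆ Metric.ball s₁ ε := by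
      intro x hx
      rw [Metric.mem_ball, Real.dist_eq, abs_lt]
      exact ⟨by linarith [hx.1, hδε], by linarith [hx.2, hδε]⟩
    have hintFu : ∀ a b : ℝ, 0 ≤ a → a ≤ b → b ≤ r →
        IntervalIntegrable (fun s => F s * u s) MeasureTheory.volume a b := by
      intro a b ha hab hbr
      refine (hFuc.mono ?_).intervalIntegrable
      rw [uIcc_of_le hab]
      exact fun x hx => ⟨ha.trans hx.1, hx.2.trans hbr⟩
    have hpos : 0 < ∫ s in (s₁ - δ)..(s₁ + δ), F s * u s := by
      apply intervalIntegral.intervalIntegral_pos_of_pos_on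
        (hintFu _ _ hIa hIb hδr.le)
      · intro x hx
        exact hball x (hsubset ⟨hx.1.le, hx.2.le⟩)
      · linarith
    have hsplit : g (s₁ + δ) = g (s₁ - δ) + ∫ s in (s₁ - δ)..(s₁ + δ), F s * u s :=
      (intervalIntegral.integral_add_adjacent_intervals
        (hintFu 0 (s₁ - δ) le_rfl hIa (by linarith)) (hintFu _ _ hIa hIb hδr.le)).symm
    rw [hsplit]
    have := hgnonneg (s₁ - δ) ⟨hIa, by linarith⟩
    linarith
  -- g is monotone past s₂ (we only need positivity on [s₂, r])
  have hgpos : ∀ σ ∈ Icc s₂ r, 0 < g σ := by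
    intro σ hσ
    have hintFu : IntervalIntegrable (fun s => F s * u s) MeasureTheory.volume s₂ σ := by
      refine (hFuc.mono ?_).intervalIntegrable
      rw [uIcc_of_le hσ.1]
      exact fun x hx => ⟨hs₂mem.1.le.trans hx.1, hx.2.trans hσ.2⟩
    have h : 0 ≤ ∫ s in s₂..σ, F s * u s :=
      intervalIntegral.integral_nonneg hσ.1 fun x hx =>
        hFunn x ⟨hs₂mem.1.le.trans hx.1, hx.2.trans hσ.2⟩
    have hintFu0 : IntervalIntegrable (fun s => F s * u s) MeasureTheory.volume 0 s₂ := by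
      refine (hFuc.mono ?_).intervalIntegrable
      rw [uIcc_of_le hs₂mem.1.le]
      exact fun x hx => ⟨hx.1, hx.2.trans hs₂mem.2.le⟩
    have hsplit : g σ = g s₂ + ∫ s in s₂..σ, F s * u s :=
      (intervalIntegral.integral_add_adjacent_intervals hintFu0 hintFu).symm
    rw [hsplit]; linarith
  -- positivity of u on [s₂, r)
  have hupos2 : ∀ t ∈ Ico s₂ r, 0 < u t := by
    intro t ht
    have htpos : 0 < t := hs₂mem.1.trans_le ht.1
    rw [heq' t ⟨htpos.le, ht.2.le⟩]
    apply mul_pos hlam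
    apply intervalIntegral.intervalIntegral_pos_of_pos_on (hint t r htpos ht.2.le le_rfl)
    · intro x hx
      have hx1 : 0 < x := htpos.trans hx.1
      apply div_pos (hgpos x ⟨ht.1.trans hx.1.le, hx.2.le⟩) (hFpos x ⟨hx1, hx.2.le⟩)
    · exact ht.2
  -- positivity of u on [0, r)
  have hupos : ∀ t ∈ Ico (0:ℝ) r, 0 < u t := by
    set s₃ := (s₂ + r) / 2 with hs₃
    have hs₃mem : s₃ ∈ Ico s₂ r := ⟨by linarith [hs₂mem.2], by linarith [hs₂mem.2]⟩
    have hus₃ : 0 < u s₃ := hupos2 s₃ hs₃mem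
    intro t ht
    rcases le_or_gt s₂ t with h | h
    · exact hupos2 t ⟨h, ht.2⟩
    · -- t < s₂ ≤ s₃
      rcases eq_or_lt_of_le ht.1 with h0 | h0
      · -- t = 0 : use continuity
        subst h0
        have hs₃pos : (0:ℝ) < s₃ := hs₂mem.1.trans_le hs₃mem.1
        have hcw2 : ContinuousWithinAt u (Ioo 0 s₃) 0 :=
          (hu.continuousWithinAt ⟨le_rfl, hr.le⟩).mono
            (fun x hx => ⟨hx.1.le, hx.2.le.trans hs₃mem.2.le⟩)
        haveI hne : (nhdsWithin (0:ℝ) (Ioo 0 s₃)).NeBot := left_nhdsWithin_Ioo_neBot hs₃pos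
        have hev : ∀ᶠ x in nhdsWithin (0:ℝ) (Ioo 0 s₃), u s₃ ≤ u x := by
          filter_upwards [eventually_mem_nhdsWithin] with x hx
          exact hmono x s₃ hx.1 hx.2.le hs₃mem.2.le
        have := ge_of_tendsto hcw2 hev
        linarith
      · have := hmono t s₃ h0 (h.le.trans hs₃mem.1) hs₃mem.2.le
        linarith
  -- derivative machinery on Ioo 0 r
  have hmemIcc : ∀ t ∈ Ioo (0:ℝ) r, Icc (0:ℝ) r ∈ nhds t := fun t ht =>
    Icc_mem_nhds ht.1 ht.2
  have hφIoo : ContinuousOn φ (Ioo 0 r) := hφcont.mono Ioo_subset_Ioc_self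
  have huφ : ∀ t ∈ Ioo (0:ℝ) r, HasDerivAt u (-(lam * φ t)) t := by
    intro t ht
    have hmeas : StronglyMeasurableAtFilter φ (nhds t) MeasureTheory.volume :=
      (hφIoo.stronglyMeasurableAtFilter isOpen_Ioo) t ht
    have hcont : ContinuousAt φ t := hφIoo.continuousAt (isOpen_Ioo.mem_nhds ht)
    have hG : HasDerivAt (fun x => ∫ σ in x..r, φ σ) (-φ t) t :=
      intervalIntegral.integral_hasDerivAt_left (hint t r ht.1 ht.2.le le_rfl) hmeas hcont
    have hG2 : HasDerivAt (fun x => lam * ∫ σ in x..r, φ σ) (lam * -φ t) t := hG.const_mul lam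
    have hequ : (fun x => lam * ∫ σ in x..r, φ σ) =ᶠ[nhds t] u := by
      filter_upwards [hmemIcc t ht] with x hx
      exact (heq' x hx).symm
    have := hG2.congr_of_eventuallyEq hequ.symm
    simpa [mul_comm] using this
  have hderiv_u : ∀ t ∈ Ioo (0:ℝ) r, deriv u t = -(lam * φ t) := fun t ht =>
    (huφ t ht).deriv
  have hgder : ∀ t ∈ Ioo (0:ℝ) r, HasDerivAt g (F t * u t) t := by
    intro t ht
    have hint0 : IntervalIntegrable (fun s => F s * u s) MeasureTheory.volume 0 t := by
      refine (hFuc.mono ?_).intervalIntegrable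
      rw [uIcc_of_le ht.1.le]
      exact fun x hx => ⟨hx.1, hx.2.trans ht.2.le⟩
    have hmeas : StronglyMeasurableAtFilter (fun s => F s * u s) (nhds t)
        MeasureTheory.volume :=
      ⟨Icc 0 r, hmemIcc t ht, hFuc.aestronglyMeasurable measurableSet_Icc⟩
    have hcont : ContinuousAt (fun s => F s * u s) t :=
      hFuc.continuousAt (hmemIcc t ht)
    exact intervalIntegral.integral_hasDerivAt_right hint0 hmeas hcont
  have hfd : ∀ t ∈ Ioo (0:ℝ) r, HasDerivAt f (deriv f t) t := by
    intro t ht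
    exact ((hf.contDiffAt (hmemIcc t ht)).differentiableAt (by norm_num)).hasDerivAt
  have hFd : ∀ t ∈ Ioo (0:ℝ) r,
      HasDerivAt F ((n - 1 : ℕ) * f t ^ (n - 2) * deriv f t) t := by
    intro t ht
    have := (hfd t ht).pow (n - 1)
    have h21 : n - 1 - 1 = n - 2 := by omega
    rw [h21] at this
    exact this
  have hFne : ∀ t ∈ Ioo (0:ℝ) r, F t ≠ 0 := fun t ht =>
    (hFpos t ⟨ht.1, ht.2.le⟩).ne'
  have hφd : ∀ t ∈ Ioo (0:ℝ) r, HasDerivAt φ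
      ((F t * u t * F t - g t * ((n - 1 : ℕ) * f t ^ (n - 2) * deriv f t)) / F t ^ 2) t := by
    intro t ht
    exact (hgder t ht).div (hFd t ht) (hFne t ht)
  -- C² smoothness
  have hderiv_eq : Set.EqOn (deriv u) (fun x => -(lam * φ x)) (Ioo 0 r) := fun x hx =>
    hderiv_u x hx
  have hcd_g : ContDiffOn ℝ 1 g (Ioo 0 r) := by
    rw [show (1 : WithTop ℕ∞) = 0 + 1 by norm_num,
      contDiffOn_succ_iff_deriv_of_isOpen isOpen_Ioo]
    refine ⟨fun x hx => ((hgder x hx).differentiableAt).differentiableWithinAt, by simp, ?_⟩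
    rw [contDiffOn_zero]
    have : Set.EqOn (deriv g) (fun s => F s * u s) (Ioo 0 r) := fun x hx => (hgder x hx).deriv
    exact ContinuousOn.congr (hFuc.mono Ioo_subset_Icc_self) this
  have hcd_F : ContDiffOn ℝ 1 F (Ioo 0 r) :=
    ((hf.of_le (by norm_num)).pow (n - 1)).mono Ioo_subset_Icc_self
  have hcd_φ : ContDiffOn ℝ 1 φ (Ioo 0 r) := hcd_g.div hcd_F hFne
  have hcd_u : ContDiffOn ℝ 2 u (Ioo 0 r) := by
    rw [show (2 : WithTop ℕ∞) = 1 + 1 by norm_num,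
      contDiffOn_succ_iff_deriv_of_isOpen isOpen_Ioo]
    refine ⟨fun x hx => ((huφ x hx).differentiableAt).differentiableWithinAt, by simp, ?_⟩
    exact (((hcd_φ.const_smul lam).neg).congr (fun x hx => by
      simpa [smul_eq_mul] using hderiv_eq hx))
  refine ⟨hcd_u, hupos, hur, ?_⟩
  -- the ODE
  intro t ht
  have hft : 0 < f t := hfpos t ⟨ht.1, ht.2.le⟩
  have hd2 : deriv (deriv u) t =
      -(lam * ((F t * u t * F t - g t * ((n - 1 : ℕ) * f t ^ (n - 2) * deriv f t)) / F t ^ 2)) := by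
    have hev : deriv u =ᶠ[nhds t] fun x => -(lam * φ x) := by
      filter_upwards [isOpen_Ioo.mem_nhds ht] with x hx
      exact hderiv_eq hx
    rw [hev.deriv_eq]
    have : HasDerivAt (fun x => -(lam * φ x))
        (-(lam * ((F t * u t * F t - g t * ((n - 1 : ℕ) * f t ^ (n - 2) * deriv f t)) / F t ^ 2))) t :=
      ((hφd t ht).const_mul lam).neg
    exact this.deriv
  rw [hd2, hderiv_u t ht]
  obtain ⟨m, rfl⟩ : ∃ m, n = m + 2 := ⟨n - 2, by omega⟩
  have hFt : F t = f t ^ (m + 1) := by rw [hF]; norm_num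
  have hn1 : ((m + 2 - 1 : ℕ) : ℝ) = (m : ℝ) + 1 := by push_cast [show m + 2 - 1 = m + 1 by omega]; ring
  have hn2 : (m + 2 - 2 : ℕ) = m := by omega
  have hcast : ((m + 2 : ℕ) : ℝ) - 1 = (m : ℝ) + 1 := by push_cast; ring
  rw [hφ]
  simp only [hFt, hn1, hn2, hcast]
  have hfne : f t ≠ 0 := hft.ne'
  field_simp
  ring
end

section
/- Let n ≥ 2 be an integer, r > 0, and f : [0,r] → ℝ a C² function with f(0) = 0, f'(0) = 1, and f(t) > 0 for all t ∈ (0,r]. Let λ ∈ ℝ and let u : [0,r] → ℝ be C² with u(t) > 0 for t ∈ [0,r), u(r) = 0, u'(0) = 0, u' bounded on (0,r), and u''(t) + (n−1)(f'(t)/f(t))u'(t) + λ·u(t) = 0 on (0,r). Then u(t) = λ·T(u)(t) for all t ∈ [0,r]; in particular λ > 0 and the quotient h(t,u) = u(t)/T(u)(t) is constant, equal to λ, on [0,r). -/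
/-! Multiplied by `f^(n-1)`, the equation takes the divergence form `(f^(n-1) u')' = -λ f^(n-1) u`,
so the flux `f(σ)^(n-1) u'(σ) + λ ∫₀^σ f^(n-1) u` is constant on `(0, r)`. It tends to `0` as
`σ → 0⁺`, since `f(0) = 0`, `n ≥ 2` and `u'` is bounded. Hence `u' = -λ f^(1-n) ∫₀^σ f^(n-1) u`,
and integrating from `t` to `r` with `u(r) = 0` gives `u = λ T(u)`. Evaluating at an interior
point, where both `u` and `T(u)` are positive, gives `λ > 0`. -/

open Set intervalIntegral

open Filter Topology MeasureTheory

/-- `ballIntegral n f u σ` is the integral of `u` over the geodesic ball of radius `σ`, up to the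
area of the unit sphere; `BBop n r f u t` is `∫ₜʳ ballIntegral n f u σ / f σ ^ (n - 1) dσ`. -/
noncomputable def ballIntegral (n : ℕ) (f u : ℝ → ℝ) (σ : ℝ) : ℝ :=
  ∫ s in (0:ℝ)..σ, f s ^ (n - 1) * u s

theorem hasDerivAt_pow_mul_deriv_of_ode (m : ℕ) {f u : ℝ → ℝ} {σ lam : ℝ} (hfσ : f σ ≠ 0)
    (hf : DifferentiableAt ℝ f σ) (hu : HasDerivAt (deriv u) (deriv (deriv u) σ) σ)
    (hode : deriv (deriv u) σ + m * (deriv f σ / f σ) * deriv u σ + lam * u σ = 0) :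
    HasDerivAt (fun t => f t ^ m * deriv u t) (-(lam * (f σ ^ m * u σ))) σ := by
  refine ((hf.hasDerivAt.pow m).mul hu).congr_deriv ?_
  rw [show deriv (deriv u) σ = -(m * (deriv f σ / f σ) * deriv u σ) - lam * u σ by linarith]
  rcases m with _ | k
  · simp
  · simp only [Pi.pow_apply]
    field_simp
    push_cast
    ring

theorem eq_of_hasDerivAt_zero_of_tendsto_nhdsGT {g : ℝ → ℝ} {a b c : ℝ}
    (hg : ∀ x ∈ Ioo a b, HasDerivAt g 0 x) (hlim : Tendsto g (𝓝[>] a) (𝓝 c)) :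
    ∀ x ∈ Ioo a b, g x = c := by
  intro x hx
  have hconst : ∀ y ∈ Ioo a b, g x = g y := fun y hy =>
    isOpen_Ioo.is_const_of_deriv_eq_zero isPreconnected_Ioo
      (fun z hz => (hg z hz).differentiableAt.differentiableWithinAt)
      (fun z hz => (hg z hz).deriv) hx hy
  refine tendsto_nhds_unique (tendsto_const_nhds.congr' ?_) hlim
  filter_upwards [Ioo_mem_nhdsGT (hx.1.trans hx.2)] using hconst

theorem integral_eq_sub_of_contDiffOn_of_deriv_eq {u g : ℝ → ℝ} {a b t : ℝ} (hab : a < b)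
    (hu : ContDiffOn ℝ 1 u (Icc a b)) (hg : ∀ x ∈ Ioo a b, deriv u x = g x)
    (ht : t ∈ Icc a b) : ∫ x in t..b, g x = u b - u t := by
  have hsub : Icc t b ⊆ Icc a b := Icc_subset_Icc ht.1 le_rfl
  have hderivWithin : ∀ x ∈ Ioo a b, derivWithin u (Icc a b) x = g x := fun x hx => by
    rw [derivWithin_of_mem_nhds (Icc_mem_nhds hx.1 hx.2), hg x hx]
  have hint : IntervalIntegrable (derivWithin u (Icc a b)) volume t b :=
    ((hu.continuousOn_derivWithin (uniqueDiffOn_Icc hab) le_rfl).mono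
      hsub).intervalIntegrable_of_Icc ht.2
  calc ∫ x in t..b, g x = ∫ x in t..b, derivWithin u (Icc a b) x := by
        refine integral_congr_ae ?_
        filter_upwards [volume.ae_ne b] with x hxb hx
        rw [uIoc_of_le ht.2] at hx
        exact (hderivWithin x ⟨ht.1.trans_lt hx.1, hx.2.lt_of_ne hxb⟩).symm
    _ = u b - u t := by
        refine integral_eq_sub_of_hasDerivAt_of_le ht.2 (hu.continuousOn.mono hsub)
          (fun x hx => ?_) hint
        have hx' : x ∈ Ioo a b := ⟨ht.1.trans_lt hx.1, hx.2⟩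
        rw [hderivWithin x hx', ← hg x hx']
        exact ((hu.contDiffAt (Icc_mem_nhds hx'.1 hx'.2)).differentiableAt one_ne_zero).hasDerivAt

section ballIntegral

variable (n : ℕ) {r : ℝ} {f u : ℝ → ℝ}

theorem intervalIntegrable_pow_mul (hf : ContinuousOn f (Icc 0 r)) (hu : ContinuousOn u (Icc 0 r))
    {σ : ℝ} (hσ : σ ∈ Icc 0 r) : IntervalIntegrable (fun s => f s ^ (n - 1) * u s) volume 0 σ :=
  (((hf.pow _).mul hu).mono (Icc_subset_Icc le_rfl hσ.2)).intervalIntegrable_of_Icc hσ.1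

theorem continuousOn_ballIntegral (hr : 0 ≤ r) (hf : ContinuousOn f (Icc 0 r))
    (hu : ContinuousOn u (Icc 0 r)) : ContinuousOn (ballIntegral n f u) (Icc 0 r) := by
  have := continuousOn_primitive_interval'
    (intervalIntegrable_pow_mul n hf hu ⟨hr, le_rfl⟩) left_mem_uIcc
  rwa [uIcc_of_le hr] at this

theorem hasDerivAt_ballIntegral (hf : ContinuousOn f (Icc 0 r)) (hu : ContinuousOn u (Icc 0 r))
    {σ : ℝ} (hσ : σ ∈ Ioo 0 r) : HasDerivAt (ballIntegral n f u) (f σ ^ (n - 1) * u σ) σ := by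
  have hnhds : Icc 0 r ∈ 𝓝 σ := Icc_mem_nhds hσ.1 hσ.2
  have hcont : ContinuousOn (fun s => f s ^ (n - 1) * u s) (Icc 0 r) := (hf.pow _).mul hu
  exact integral_hasDerivAt_right (intervalIntegrable_pow_mul n hf hu (Ioo_subset_Icc_self hσ))
    ⟨_, hnhds, hcont.aestronglyMeasurable measurableSet_Icc⟩ (hcont.continuousAt hnhds)

theorem ballIntegral_pos (hf : ContinuousOn f (Icc 0 r)) (hu : ContinuousOn u (Icc 0 r))
    (hfpos : ∀ t ∈ Ioc 0 r, 0 < f t) (hupos : ∀ t ∈ Ico 0 r, 0 < u t) {σ : ℝ} (hσ : σ ∈ Ioc 0 r) :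
    0 < ballIntegral n f u σ :=
  intervalIntegral_pos_of_pos_on (intervalIntegrable_pow_mul n hf hu ⟨hσ.1.le, hσ.2⟩)
    (fun s hs => mul_pos (pow_pos (hfpos s ⟨hs.1, hs.2.le.trans hσ.2⟩) _)
      (hupos s ⟨hs.1.le, hs.2.trans_le hσ.2⟩)) hσ.1

theorem BBop_pos (hf : ContinuousOn f (Icc 0 r)) (hu : ContinuousOn u (Icc 0 r))
    (hfpos : ∀ t ∈ Ioc 0 r, 0 < f t) (hupos : ∀ t ∈ Ico 0 r, 0 < u t) {t : ℝ} (ht : t ∈ Ioo 0 r) :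
    0 < BBop n r f u t := by
  have hsub : Icc t r ⊆ Icc 0 r := Icc_subset_Icc ht.1.le le_rfl
  have hfpos' : ∀ σ ∈ Icc t r, f σ ^ (n - 1) ≠ 0 := fun σ hσ =>
    (pow_pos (hfpos σ ⟨ht.1.trans_le hσ.1, hσ.2⟩) _).ne'
  have hcont : ContinuousOn (fun σ => 1 / f σ ^ (n - 1) * ballIntegral n f u σ) (Icc t r) :=
    (continuousOn_const.div ((hf.mono hsub).pow _) hfpos').mul
      ((continuousOn_ballIntegral n (ht.1.trans ht.2).le hf hu).mono hsub)
  refine intervalIntegral_pos_of_pos_on (hcont.intervalIntegrable_of_Icc ht.2.le)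
    (fun σ hσ => ?_) ht.2
  have hfσ := hfpos σ ⟨ht.1.trans hσ.1, hσ.2.le⟩
  exact mul_pos (by positivity) (ballIntegral_pos n hf hu hfpos hupos ⟨ht.1.trans hσ.1, hσ.2.le⟩)

end ballIntegral

section flux

variable {n : ℕ} {r lam : ℝ} {f u : ℝ → ℝ}

theorem tendsto_flux_nhdsGT_zero (hn : 2 ≤ n) (hr : 0 < r) (hf : ContinuousOn f (Icc 0 r))
    (hf0 : f 0 = 0) (hu : ContinuousOn u (Icc 0 r))
    (hu'bdd : ∃ C : ℝ, ∀ t ∈ Ioo 0 r, |deriv u t| ≤ C) :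
    Tendsto (fun σ => f σ ^ (n - 1) * deriv u σ + lam * ballIntegral n f u σ) (𝓝[>] 0) (𝓝 0) := by
  have hlim : ∀ {g : ℝ → ℝ}, ContinuousOn g (Icc 0 r) → Tendsto g (𝓝[>] 0) (𝓝 (g 0)) :=
    fun hg => ((hg 0 ⟨le_rfl, hr.le⟩).mono_of_mem_nhdsWithin (Icc_mem_nhdsGT hr)).tendsto
  have hpow : Tendsto (fun σ => f σ ^ (n - 1)) (𝓝[>] 0) (𝓝 0) := by
    simpa [hf0, Nat.sub_ne_zero_of_lt hn] using hlim (g := fun σ => f σ ^ (n - 1)) (hf.pow _)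
  obtain ⟨C, hC⟩ := hu'bdd
  have hbdd : IsBoundedUnder (· ≤ ·) (𝓝[>] 0) (norm ∘ deriv u) :=
    isBoundedUnder_of_eventually_le (a := C) <| by
      filter_upwards [Ioo_mem_nhdsGT hr] with t ht using hC t ht
  have hball : Tendsto (ballIntegral n f u) (𝓝[>] 0) (𝓝 0) := by
    simpa [ballIntegral] using hlim (continuousOn_ballIntegral n hr.le hf hu)
  simpa using (hpow.zero_mul_isBoundedUnder_le hbdd).add (hball.const_mul lam)

theorem deriv_eq_neg_mul_ballIntegral (hn : 2 ≤ n) (hr : 0 < r) (hf : ContDiffOn ℝ 2 f (Icc 0 r))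
    (hf0 : f 0 = 0) (hfpos : ∀ t ∈ Ioc 0 r, 0 < f t) (hu : ContDiffOn ℝ 2 u (Icc 0 r))
    (hu'bdd : ∃ C : ℝ, ∀ t ∈ Ioo 0 r, |deriv u t| ≤ C)
    (huode : ∀ t ∈ Ioo 0 r,
      deriv (deriv u) t + ((n : ℝ) - 1) * (deriv f t / f t) * deriv u t + lam * u t = 0) :
    ∀ σ ∈ Ioo 0 r, deriv u σ = -(lam * (1 / f σ ^ (n - 1) * ballIntegral n f u σ)) := by
  have hflux : ∀ σ ∈ Ioo 0 r,
      HasDerivAt (fun σ => f σ ^ (n - 1) * deriv u σ + lam * ballIntegral n f u σ) 0 σ := by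
    intro σ hσ
    have hnhds : Icc 0 r ∈ 𝓝 σ := Icc_mem_nhds hσ.1 hσ.2
    have hode := huode σ hσ
    rw [← Nat.cast_pred (by omega)] at hode
    have hu'' : HasDerivAt (deriv u) (deriv (deriv u) σ) σ :=
      (((hu.contDiffAt hnhds).derivWithin (m := 1) le_rfl).differentiableAt one_ne_zero).hasDerivAt
    refine ((hasDerivAt_pow_mul_deriv_of_ode (n - 1) (hfpos σ ⟨hσ.1, hσ.2.le⟩).ne'
      ((hf.contDiffAt hnhds).differentiableAt two_ne_zero) hu'' hode).add
      ((hasDerivAt_ballIntegral n hf.continuousOn hu.continuousOn hσ).const_mul lam)).congr_deriv ?_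
    ring
  intro σ hσ
  have hzero := eq_of_hasDerivAt_zero_of_tendsto_nhdsGT hflux
    (tendsto_flux_nhdsGT_zero hn hr hf.continuousOn hf0 hu.continuousOn hu'bdd) σ hσ
  have hfσ : f σ ^ (n - 1) ≠ 0 := (pow_pos (hfpos σ ⟨hσ.1, hσ.2.le⟩) _).ne'
  field_simp
  linarith

end flux

theorem stmt7_general (n : ℕ) (hn : 2 ≤ n) (r : ℝ) (hr : 0 < r)
    (f : ℝ → ℝ) (hf : ContDiffOn ℝ 2 f (Set.Icc 0 r))
    (hf0 : f 0 = 0)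
    (hfpos : ∀ t ∈ Set.Ioc (0:ℝ) r, 0 < f t)
    (lam : ℝ) (u : ℝ → ℝ) (hu : ContDiffOn ℝ 2 u (Set.Icc 0 r))
    (hupos : ∀ t ∈ Set.Ico (0:ℝ) r, 0 < u t) (hur : u r = 0)
    (hu'bdd : ∃ C : ℝ, ∀ t ∈ Set.Ioo (0:ℝ) r, |deriv u t| ≤ C)
    (huode : ∀ t ∈ Set.Ioo (0:ℝ) r,
      deriv (deriv u) t + ((n : ℝ) - 1) * (deriv f t / f t) * deriv u t + lam * u t = 0) :
    (∀ t ∈ Set.Icc (0:ℝ) r, u t = lam * BBop n r f u t) ∧ 0 < lam := by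
  have hfixed : ∀ t ∈ Icc 0 r, u t = lam * BBop n r f u t := by
    intro t ht
    have hftc := integral_eq_sub_of_contDiffOn_of_deriv_eq hr (hu.of_le (by norm_num))
      (deriv_eq_neg_mul_ballIntegral hn hr hf hf0 hfpos hu hu'bdd huode) ht
    rw [intervalIntegral.integral_neg, intervalIntegral.integral_const_mul, hur] at hftc
    change u t = lam * ∫ σ in t..r, 1 / f σ ^ (n - 1) * ballIntegral n f u σ
    linarith
  have hmid : r / 2 ∈ Ioo 0 r := ⟨half_pos hr, half_lt_self hr⟩
  refine ⟨hfixed, pos_of_mul_pos_left ?_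
    (BBop_pos n hf.continuousOn hu.continuousOn hfpos hupos hmid).le⟩
  rw [← hfixed _ (Ioo_subset_Icc_self hmid)]
  exact hupos _ (Ioo_subset_Ico_self hmid)

/-- Equality case of Theorem 1 (converse direction): if `u` is a positive radial
Dirichlet eigenfunction with eigenvalue `λ`, then `u = λ · T(u)` on `[0,r]`; in particular
`λ > 0`. -/
theorem stmt7 (n : ℕ) (hn : 2 ≤ n) (r : ℝ) (hr : 0 < r)
    (f : ℝ → ℝ) (hf : ContDiffOn ℝ 2 f (Set.Icc 0 r))
    (hf0 : f 0 = 0) (hf'0 : derivWithin f (Set.Icc 0 r) 0 = 1)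
    (hfpos : ∀ t ∈ Set.Ioc (0:ℝ) r, 0 < f t)
    (lam : ℝ) (u : ℝ → ℝ) (hu : ContDiffOn ℝ 2 u (Set.Icc 0 r))
    (hupos : ∀ t ∈ Set.Ico (0:ℝ) r, 0 < u t) (hur : u r = 0)
    (hu'0 : derivWithin u (Set.Icc 0 r) 0 = 0)
    (hu'bdd : ∃ C : ℝ, ∀ t ∈ Set.Ioo (0:ℝ) r, |deriv u t| ≤ C)
    (huode : ∀ t ∈ Set.Ioo (0:ℝ) r,
      deriv (deriv u) t + ((n : ℝ) - 1) * (deriv f t / f t) * deriv u t + lam * u t = 0) :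
    (∀ t ∈ Set.Icc (0:ℝ) r, u t = lam * BBop n r f u t) ∧ 0 < lam :=
  stmt7_general n hn r hr f hf hf0 hfpos lam u hu hupos hur hu'bdd huode
end

section
/- Let n ≥ 2 be an integer and 0 < r < π. Let λ ∈ ℝ and let φ : [0,r] → ℝ be C² with φ(t) > 0 for t ∈ [0,r), φ(r) = 0, φ'(0) = 0, and φ''(t) + (n−1)·(cos t / sin t)·φ'(t) + λφ(t) = 0 on (0,r). Then λ ≥ 1 / ( ∫₀ʳ (1/sin^{n−1}(σ)) · (∫₀^σ sin^{n−1}(s) ds) dσ ). -/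
/-!
With `w = sin ^ (n - 1)` the equation reads `(w φ')' = -λ w φ`. Integrating from `0`, where `w`
vanishes, gives `-φ'(σ) = λ w(σ)⁻¹ ∫₀^σ w φ`. Since `φ(0) > φ(r)` this forces `λ > 0`, so `φ` is
decreasing and `∫₀^σ w φ ≤ φ(0) ∫₀^σ w`; integrating once more,
`φ(0) = -∫₀ʳ φ' ≤ λ φ(0) ∫₀ʳ w(σ)⁻¹ ∫₀^σ w`.
The outer integrand is bounded since `sin s ≤ (r / sin r) sin σ` for `0 ≤ s ≤ σ ≤ r`, by
concavity of `sin`.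
-/

open Set intervalIntegral Real MeasureTheory

section

variable {φ : ℝ → ℝ} {a b t : ℝ}

lemma derivWithin_Icc_eq_deriv (ht : t ∈ Ioo a b) : derivWithin φ (Icc a b) t = deriv φ t :=
  derivWithin_of_mem_nhds (Icc_mem_nhds ht.1 ht.2)

lemma ContDiffOn.hasDerivAt_derivWithin_Icc (hφ : ContDiffOn ℝ 2 φ (Icc a b)) (ht : t ∈ Ioo a b) :
    HasDerivAt (derivWithin φ (Icc a b)) (deriv (deriv φ) t) t := by
  have hφ' := (hφ.contDiffAt (Icc_mem_nhds ht.1 ht.2)).derivWithin (m := 1) le_rfl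
  refine (hφ'.differentiableAt one_ne_zero).hasDerivAt.congr_of_eventuallyEq ?_
  filter_upwards [isOpen_Ioo.mem_nhds ht] with u hu using derivWithin_Icc_eq_deriv hu

lemma antitoneOn_Icc_of_neg_derivWithin_nonneg (hφ : ContDiffOn ℝ 1 φ (Icc a b))
    (h : ∀ t ∈ Ioo a b, 0 ≤ -derivWithin φ (Icc a b) t) : AntitoneOn φ (Icc a b) := by
  refine antitoneOn_of_deriv_nonpos (convex_Icc a b) hφ.continuousOn
    ((hφ.differentiableOn one_ne_zero).mono interior_subset) fun t ht => ?_
  rw [interior_Icc] at ht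
  rw [← derivWithin_Icc_eq_deriv ht]
  exact neg_nonneg.1 (h t ht)

lemma integral_mul_le_mul_integral_of_le {f g : ℝ → ℝ} {M : ℝ} (hab : a ≤ b)
    (hg : ContinuousOn g (Icc a b)) (hf : ContinuousOn f (Icc a b))
    (hg0 : ∀ x ∈ Icc a b, 0 ≤ g x) (hfM : ∀ x ∈ Icc a b, f x ≤ M) :
    ∫ x in a..b, g x * f x ≤ M * ∫ x in a..b, g x := by
  rw [← intervalIntegral.integral_const_mul]
  refine intervalIntegral.integral_mono_on hab ((hg.mul hf).intervalIntegrable_of_Icc hab)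
    ((hg.const_smul M).intervalIntegrable_of_Icc hab) fun x hx => ?_
  rw [mul_comm M]
  exact mul_le_mul_of_nonneg_left (hfM x hx) (hg0 x hx)

end

section WeightedRadialEigenfunction

variable {φ w w' : ℝ → ℝ} {r lam : ℝ}

lemma neg_derivWithin_eq_mul_integral_div (hr : 0 < r) (hφ : ContDiffOn ℝ 2 φ (Icc 0 r))
    (hw : ContinuousOn w (Icc 0 r)) (hw0 : w 0 = 0) (hwpos : ∀ t ∈ Ioo 0 r, 0 < w t)
    (hw' : ∀ t ∈ Ioo 0 r, HasDerivAt w (w' t) t)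
    (hode : ∀ t ∈ Ioo 0 r, deriv (deriv φ) t + w' t / w t * deriv φ t + lam * φ t = 0)
    {σ : ℝ} (hσ : σ ∈ Ioo 0 r) :
    -derivWithin φ (Icc 0 r) σ = lam * ((∫ s in 0..σ, w s * φ s) / w σ) := by
  have hsub : Icc 0 σ ⊆ Icc 0 r := Icc_subset_Icc_right hσ.2.le
  have hflux : ∀ t ∈ Ioo 0 σ, HasDerivAt (fun s => w s * derivWithin φ (Icc 0 r) s)
      (-(lam * (w t * φ t))) t := by
    intro t ht
    have ht' : t ∈ Ioo 0 r := ⟨ht.1, ht.2.trans hσ.2⟩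
    refine ((hw' t ht').mul (hφ.hasDerivAt_derivWithin_Icc ht')).congr_deriv ?_
    rw [derivWithin_Icc_eq_deriv ht']
    have hw't : w t * (w' t / w t) = w' t := mul_div_cancel₀ _ (hwpos t ht').ne'
    linear_combination (w t) * hode t ht' - deriv φ t * hw't
  have hcont : ContinuousOn (fun s => w s * derivWithin φ (Icc 0 r) s) (Icc 0 σ) :=
    (hw.mul (hφ.continuousOn_derivWithin (uniqueDiffOn_Icc hr) one_le_two)).mono hsub
  have hint : IntervalIntegrable (fun s => -(lam * (w s * φ s))) volume 0 σ :=
    (((hw.mul hφ.continuousOn).mono hsub).const_smul lam).neg.intervalIntegrable_of_Icc hσ.1.le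
  have hFTC := integral_eq_sub_of_hasDeriv_right_of_le hσ.1.le hcont
    (fun t ht => (hflux t ht).hasDerivWithinAt) hint
  rw [intervalIntegral.integral_neg, intervalIntegral.integral_const_mul, hw0, zero_mul,
    sub_zero] at hFTC
  have hwσ := (hwpos σ hσ).ne'
  field_simp
  linarith

lemma pos_of_forall_neg_derivWithin_eq_mul {q : ℝ → ℝ} (hr : 0 < r)
    (hφ : ContDiffOn ℝ 1 φ (Icc 0 r)) (hφr : φ r < φ 0) (hq : ∀ σ ∈ Ioo 0 r, 0 ≤ q σ)
    (hψ : ∀ σ ∈ Ioo 0 r, -derivWithin φ (Icc 0 r) σ = lam * q σ) : 0 < lam := by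
  by_contra! hlam
  have hle : ∫ σ in 0..r, -derivWithin φ (Icc 0 r) σ ≤ ∫ σ in 0..r, (0 : ℝ) :=
    integral_mono_on_of_le_Ioo hr.le
      ((hφ.continuousOn_derivWithin (uniqueDiffOn_Icc hr) le_rfl).intervalIntegrable_of_Icc
        hr.le).neg
      intervalIntegrable_const fun σ hσ => by
        rw [hψ σ hσ]
        exact mul_nonpos_of_nonpos_of_nonneg hlam (hq σ hσ)
  rw [intervalIntegral.integral_neg, integral_derivWithin_Icc_of_contDiffOn_Icc hφ hr.le,
    intervalIntegral.integral_zero] at hle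
  linarith

theorem one_div_integral_le_eigenvalue (hr : 0 < r) (hφ : ContDiffOn ℝ 2 φ (Icc 0 r))
    (hφpos : ∀ t ∈ Ico 0 r, 0 < φ t) (hφr : φ r = 0)
    (hw : ContinuousOn w (Icc 0 r)) (hw0 : w 0 = 0) (hwpos : ∀ t ∈ Ioo 0 r, 0 < w t)
    (hw' : ∀ t ∈ Ioo 0 r, HasDerivAt w (w' t) t)
    (hode : ∀ t ∈ Ioo 0 r, deriv (deriv φ) t + w' t / w t * deriv φ t + lam * φ t = 0)
    (hH : IntervalIntegrable (fun σ => 1 / w σ * ∫ s in 0..σ, w s) volume 0 r) :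
    1 / (∫ σ in 0..r, 1 / w σ * ∫ s in 0..σ, w s) ≤ lam := by
  set ψ := derivWithin φ (Icc 0 r)
  set J := fun σ => ∫ s in 0..σ, w s * φ s
  have hφ₁ : ContDiffOn ℝ 1 φ (Icc 0 r) := hφ.of_le one_le_two
  have hφ0 : 0 < φ 0 := hφpos 0 ⟨le_rfl, hr⟩
  have hw_nonneg : ∀ t ∈ Ico 0 r, 0 ≤ w t := by
    rintro t ⟨ht0, htr⟩
    rcases ht0.eq_or_lt with rfl | ht0
    · exact hw0.ge
    · exact (hwpos t ⟨ht0, htr⟩).le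
  have hψ_eq : ∀ σ ∈ Ioo 0 r, -ψ σ = lam * (J σ / w σ) := fun σ hσ =>
    neg_derivWithin_eq_mul_integral_div hr hφ hw hw0 hwpos hw' hode hσ
  have hratio_nonneg : ∀ σ ∈ Ioo 0 r, 0 ≤ J σ / w σ := fun σ hσ =>
    div_nonneg (intervalIntegral.integral_nonneg hσ.1.le fun s hs =>
      have hs' : s ∈ Ico 0 r := ⟨hs.1, hs.2.trans_lt hσ.2⟩
      mul_nonneg (hw_nonneg s hs') (hφpos s hs').le) (hwpos σ hσ).le
  have hlam : 0 < lam :=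
    pos_of_forall_neg_derivWithin_eq_mul hr hφ₁ (hφr ▸ hφ0) hratio_nonneg hψ_eq
  have hφ_le : ∀ t ∈ Icc 0 r, φ t ≤ φ 0 := fun t ht =>
    antitoneOn_Icc_of_neg_derivWithin_nonneg hφ₁
      (fun s hs => hψ_eq s hs ▸ mul_nonneg hlam.le (hratio_nonneg s hs))
      (left_mem_Icc.2 hr.le) ht ht.1
  have hJ_le : ∀ σ ∈ Ioo 0 r, J σ ≤ φ 0 * ∫ s in 0..σ, w s := fun σ hσ =>
    have hsub : Icc 0 σ ⊆ Icc 0 r := Icc_subset_Icc_right hσ.2.le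
    integral_mul_le_mul_integral_of_le hσ.1.le (hw.mono hsub) (hφ.continuousOn.mono hsub)
      (fun s hs => hw_nonneg s ⟨hs.1, hs.2.trans_lt hσ.2⟩) (fun s hs => hφ_le s (hsub hs))
  have hmain : φ 0 ≤ lam * φ 0 * ∫ σ in 0..r, 1 / w σ * ∫ s in 0..σ, w s := by
    calc φ 0 = ∫ σ in 0..r, -ψ σ := by
          rw [intervalIntegral.integral_neg, integral_derivWithin_Icc_of_contDiffOn_Icc hφ₁ hr.le,
            hφr, zero_sub, neg_neg]
      _ ≤ ∫ σ in 0..r, lam * φ 0 * (1 / w σ * ∫ s in 0..σ, w s) := by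
        refine integral_mono_on_of_le_Ioo hr.le
          ((hφ₁.continuousOn_derivWithin (uniqueDiffOn_Icc hr) le_rfl).intervalIntegrable_of_Icc
            hr.le).neg (hH.const_mul _) fun σ hσ => ?_
        calc -ψ σ = lam * (J σ / w σ) := hψ_eq σ hσ
          _ ≤ lam * ((φ 0 * ∫ s in 0..σ, w s) / w σ) := by
            gcongr
            · exact (hwpos σ hσ).le
            · exact hJ_le σ hσ
          _ = lam * φ 0 * (1 / w σ * ∫ s in 0..σ, w s) := by ring
      _ = lam * φ 0 * ∫ σ in 0..r, 1 / w σ * ∫ s in 0..σ, w s :=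
        intervalIntegral.integral_const_mul _ _
  have hone : 1 ≤ lam * ∫ σ in 0..r, 1 / w σ * ∫ s in 0..σ, w s :=
    le_of_mul_le_mul_left (by linarith) hφ0
  rw [div_le_iff₀ (pos_of_mul_pos_right (one_pos.trans_le hone) hlam.le)]
  linarith

end WeightedRadialEigenfunction

lemma natCast_mul_pow_pred_mul_div_pow {K : Type*} [Field K] (m : ℕ) {x : K} (hx : x ≠ 0) (c : K) :
    m * x ^ (m - 1) * c / x ^ m = m * (c / x) := by
  cases m with
  | zero => simp
  | succ k =>
    rw [Nat.add_sub_cancel, pow_succ]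
    field_simp

namespace Real

lemma sin_le_div_sin_mul_sin {r s σ : ℝ} (hr : 0 < r) (hrπ : r < π) (hs : 0 ≤ s) (hsσ : s ≤ σ)
    (hσr : σ ≤ r) : sin s ≤ r / sin r * sin σ := by
  have hsinr : 0 < sin r := sin_pos_of_pos_of_lt_pi hr hrπ
  have hchord : σ / r * sin r ≤ sin σ := by
    have := strictConcaveOn_sin_Icc.concaveOn.2 ⟨hr.le, hrπ.le⟩ ⟨le_rfl, pi_pos.le⟩
      (div_nonneg (hs.trans hsσ) hr.le) (sub_nonneg.2 ((div_le_one hr).2 hσr))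
      (add_sub_cancel (σ / r) 1)
    simpa [smul_eq_mul, div_mul_cancel₀ σ hr.ne'] using this
  calc sin s ≤ σ := (sin_le hs).trans hsσ
    _ = r / sin r * (σ / r * sin r) := by field_simp
    _ ≤ r / sin r * sin σ := by gcongr

lemma intervalIntegrable_one_div_sin_pow_mul_integral (m : ℕ) {r : ℝ} (hr : 0 < r)
    (hrπ : r < π) :
    IntervalIntegrable (fun σ => 1 / sin σ ^ m * ∫ s in 0..σ, sin s ^ m) volume 0 r := by
  set C := r / sin r
  have hC : 0 < C := div_pos hr (sin_pos_of_pos_of_lt_pi hr hrπ)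
  have hK : Continuous fun σ => ∫ s in 0..σ, sin s ^ m :=
    intervalIntegral.continuous_primitive
      (fun a b => (continuous_sin.pow m).intervalIntegrable a b) 0
  refine (intervalIntegrable_const (μ := volume) (c := r * C ^ m)).mono_fun' ?_ ?_
  · exact ((measurable_const.div (continuous_sin.measurable.pow_const m)).mul
      hK.measurable).aestronglyMeasurable
  rw [uIoc_of_le hr.le]
  refine (ae_restrict_iff' measurableSet_Ioc).2 (Filter.Eventually.of_forall fun σ hσ => ?_)
  have hsinσ : 0 < sin σ := sin_pos_of_pos_of_lt_pi hσ.1 (hσ.2.trans_lt hrπ)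
  have hK_nonneg : 0 ≤ ∫ s in 0..σ, sin s ^ m :=
    intervalIntegral.integral_nonneg hσ.1.le fun s hs =>
      pow_nonneg (sin_nonneg_of_nonneg_of_le_pi hs.1 (by linarith [hs.2, hσ.2])) m
  have hK_le : ∫ s in 0..σ, sin s ^ m ≤ σ * (C * sin σ) ^ m := by
    have := intervalIntegral.integral_mono_on (μ := volume) hσ.1.le
      ((continuous_sin.pow m).intervalIntegrable 0 σ) intervalIntegrable_const fun s hs =>
        pow_le_pow_left₀ (sin_nonneg_of_nonneg_of_le_pi hs.1 (by linarith [hs.2, hσ.2]))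
          (sin_le_div_sin_mul_sin hr hrπ hs.1 hs.2 hσ.2) m
    simpa using this
  dsimp only
  rw [norm_of_nonneg (by positivity), one_div_mul_eq_div, div_le_iff₀ (by positivity)]
  calc ∫ s in 0..σ, sin s ^ m ≤ σ * (C * sin σ) ^ m := hK_le
    _ ≤ r * (C * sin σ) ^ m := by gcongr; exact hσ.2
    _ = r * C ^ m * sin σ ^ m := by ring

end Real

theorem stmt9_general (n : ℕ) (hn : 2 ≤ n) (r : ℝ) (hr : 0 < r) (hrπ : r < Real.pi)
    (lam : ℝ) (φ : ℝ → ℝ) (hφ : ContDiffOn ℝ 2 φ (Set.Icc 0 r))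
    (hφpos : ∀ t ∈ Set.Ico (0:ℝ) r, 0 < φ t) (hφr : φ r = 0)
    (hφode : ∀ t ∈ Set.Ioo (0:ℝ) r,
      deriv (deriv φ) t
        + ((n : ℝ) - 1) * (Real.cos t / Real.sin t) * deriv φ t + lam * φ t = 0) :
    lam ≥ 1 / (∫ σ in (0:ℝ)..r,
      (1 / Real.sin σ ^ (n - 1)) * ∫ s in (0:ℝ)..σ, Real.sin s ^ (n - 1)) := by
  have hsin : ∀ t ∈ Ioo 0 r, 0 < sin t := fun t ht =>
    sin_pos_of_pos_of_lt_pi ht.1 (ht.2.trans hrπ)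
  have hcast : ((n - 1 : ℕ) : ℝ) = n - 1 := by
    rw [Nat.cast_sub (by omega), Nat.cast_one]
  refine one_div_integral_le_eigenvalue hr hφ hφpos hφr (continuous_sin.pow _).continuousOn
    (by simp [zero_pow (by omega : n - 1 ≠ 0)]) (fun t ht => pow_pos (hsin t ht) _)
    (fun t _ => (hasDerivAt_sin t).pow _) (fun t ht => ?_)
    (intervalIntegrable_one_div_sin_pow_mul_integral _ hr hrπ)
  rw [natCast_mul_pow_pred_mul_div_pow _ (hsin t ht).ne', hcast]
  exact hφode t ht

/-- Betz–Camera–Gzyl lower bound for the first Dirichlet eigenvalue of a spherical cap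
of radius `r < π` in the unit `n`-sphere:
`λ ≥ 1 / ∫₀ʳ sin(σ)^{-(n-1)} ∫₀^σ sin(s)^{n-1} ds dσ`. -/
theorem stmt9 (n : ℕ) (hn : 2 ≤ n) (r : ℝ) (hr : 0 < r) (hrπ : r < Real.pi)
    (lam : ℝ) (φ : ℝ → ℝ) (hφ : ContDiffOn ℝ 2 φ (Set.Icc 0 r))
    (hφpos : ∀ t ∈ Set.Ico (0:ℝ) r, 0 < φ t) (hφr : φ r = 0)
    (hφ'0 : derivWithin φ (Set.Icc 0 r) 0 = 0)
    (hφode : ∀ t ∈ Set.Ioo (0:ℝ) r,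
      deriv (deriv φ) t
        + ((n : ℝ) - 1) * (Real.cos t / Real.sin t) * deriv φ t + lam * φ t = 0) :
    lam ≥ 1 / (∫ σ in (0:ℝ)..r,
      (1 / Real.sin σ ^ (n - 1)) * ∫ s in (0:ℝ)..σ, Real.sin s ^ (n - 1)) :=
  stmt9_general n hn r hr hrπ lam φ hφ hφpos hφr hφode
end
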